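/- arXiv:0808.3054 — 3 statements merged into one kernel-verified Lean document; each statement's English description precedes it below -/
import Mathlib

section
/- There exists a constant c > 0, depending only on ε, I and H, such that for every integer n ≥ 2, all points t^1, …, t^n ∈ I satisfying t_ℓ^1 ≤ t_ℓ^2 ≤ ⋯ ≤ t_ℓ^n, and all real numbers a_1, …, a_{n−1}, one has ∫_{ℝ^N} ( f_{t^n}^ℓ(r) − ∑_{j=1}^{n−1} a_j f_{t^j}^ℓ(r) )² dr ≥ c (t_ℓ^n − t_ℓ^{n−1})^{2H_ℓ}. -/
open MeasureTheory Real Set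

noncomputable section

/-- The kernel `f_t^ℓ` of the Wiener-integral field `Y_ℓ`:
`f_t^ℓ(r) = 1_{R_ℓ(t)}(r) ∏_k (t_k − r_k)^{H_k − 1/2}`, where
`R_ℓ(t) = {r : 0 ≤ r_i ≤ ε (i ≠ ℓ), ε < r_ℓ ≤ t_ℓ}`. -/
def fker (N : ℕ) (H : Fin N → ℝ) (ε : ℝ) (ℓ : Fin N) (t : Fin N → ℝ) :
    (Fin N → ℝ) → ℝ :=
  Set.indicator {r | (∀ i, i ≠ ℓ → 0 ≤ r i ∧ r i ≤ ε) ∧ ε < r ℓ ∧ r ℓ ≤ t ℓ}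
    (fun r => ∏ k, (t k - r k) ^ (H k - 1 / 2))

/-!
Write `s = t^{n-1}_ℓ`. Every kernel `f_{t^j}` with `j ≤ n - 1` is supported in `{r_ℓ ≤ t^j_ℓ ≤ s}`,
so on the half-space `{r_ℓ > s}` the integrand is `(f_{t^n})²`. There this square is a product
`∏_k g_k(r_k)` of one-variable functions, and Fubini turns its integral into `∏_k ∫ g_k`.
The `ℓ`-th factor is `∫_s^{t^n_ℓ} (t^n_ℓ - y)^{2H_ℓ-1} dy = (t^n_ℓ - s)^{2H_ℓ} / (2H_ℓ)`, and each
other factor is at least `ε · min((a_k - ε)^{2H_k-1}, b_k^{2H_k-1})`, since there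
`t_k - y ∈ [a_k - ε, b_k]`.
-/

lemma min_rpow_le_rpow {lo hi x : ℝ} (hlo : 0 < lo) (hx : x ∈ Icc lo hi) (p : ℝ) :
    min (lo ^ p) (hi ^ p) ≤ x ^ p := by
  rcases le_or_gt 0 p with hp | hp
  · exact (min_le_left _ _).trans (rpow_le_rpow hlo.le hx.1 hp)
  · exact (min_le_right _ _).trans (rpow_le_rpow_of_nonpos (hlo.trans_le hx.1) hx.2 hp.le)

lemma integrableOn_Icc_sub_rpow {p : ℝ} (hp : -1 < p) {a b c : ℝ} (hbc : b ≤ c) :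
    IntegrableOn (fun y => (c - y) ^ p) (Icc a b) := by
  have hIoc : IntegrableOn (fun y => (c - y) ^ p) (Ioc a c) := by
    simpa using
      ((intervalIntegral.intervalIntegrable_rpow' hp (a := c - a) (b := 0)).comp_sub_left c).1
  exact ((integrableOn_Icc_iff_integrableOn_Ioc enorm_ne_top).2 hIoc).mono_set
    (Icc_subset_Icc_right hbc)

variable {N : ℕ} {H : Fin N → ℝ} {ε : ℝ} {ℓ : Fin N} {t : Fin N → ℝ}

lemma fker_eq_zero_of_lt {r : Fin N → ℝ} (h : t ℓ < r ℓ) : fker N H ε ℓ t r = 0 :=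
  indicator_of_notMem (fun hr => h.not_ge hr.2.2) _

lemma measurable_fker : Measurable (fker N H ε ℓ t) :=
  Measurable.indicator (by fun_prop) (by measurability)

variable (H ε ℓ t) in
def fkerSqFactor (s : ℝ) (k : Fin N) : ℝ → ℝ :=
  (if k = ℓ then Ioc s (t ℓ) else Icc 0 ε).indicator fun y => (t k - y) ^ (2 * H k - 1)

lemma indicator_fker_sq_eq_prod {s : ℝ} (hs : ε ≤ s) (ht : ∀ k, k ≠ ℓ → ε ≤ t k)
    (r : Fin N → ℝ) :
    {r | s < r ℓ}.indicator (fun r => fker N H ε ℓ t r ^ 2) r =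
      ∏ k, fkerSqFactor H ε ℓ t s k (r k) := by
  by_cases hr : ∀ k, r k ∈ if k = ℓ then Ioc s (t ℓ) else Icc 0 ε
  · have hrℓ : r ℓ ∈ Ioc s (t ℓ) := by simpa using hr ℓ
    have hr_ne : ∀ k, k ≠ ℓ → r k ∈ Icc 0 ε := fun k hk => by simpa [hk] using hr k
    have hbase : ∀ k, 0 ≤ t k - r k := fun k => by
      rcases eq_or_ne k ℓ with rfl | hk
      · linarith [hrℓ.2]
      · linarith [(hr_ne k hk).2, ht k hk]
    rw [indicator_of_mem (show r ∈ {r | s < r ℓ} from hrℓ.1), fker, indicator_of_mem,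
      ← Finset.prod_pow]
    · refine Finset.prod_congr rfl fun k _ => ?_
      rw [fkerSqFactor, indicator_of_mem (hr k), ← rpow_mul_natCast (hbase k)]
      ring_nf
    · exact ⟨hr_ne, hs.trans_lt hrℓ.1, hrℓ.2⟩
  · obtain ⟨k, hk⟩ := not_forall.1 hr
    rw [Finset.prod_eq_zero (Finset.mem_univ k) (indicator_of_notMem hk _)]
    refine indicator_apply_eq_zero.2 fun hsr => ?_
    rw [fker, indicator_of_notMem, zero_pow two_ne_zero]
    rintro ⟨hr_ne, -, hrt⟩
    refine hk ?_
    split_ifs with hkℓ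
    · subst hkℓ
      exact ⟨hsr, hrt⟩
    · exact hr_ne k hkℓ

lemma fker_sq_eq_prod (ht : ∀ k, k ≠ ℓ → ε ≤ t k) (r : Fin N → ℝ) :
    fker N H ε ℓ t r ^ 2 = ∏ k, fkerSqFactor H ε ℓ t ε k (r k) := by
  rw [← indicator_fker_sq_eq_prod le_rfl ht]
  by_cases hr : r ∈ {r : Fin N → ℝ | ε < r ℓ}
  · rw [indicator_of_mem hr]
  · have hzero : fker N H ε ℓ t r = 0 := indicator_of_notMem (fun h => hr h.2.1) _
    rw [indicator_of_notMem hr, hzero, zero_pow two_ne_zero]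

lemma integrable_fkerSqFactor (hH : ∀ k, 0 < H k) (ht : ∀ k, k ≠ ℓ → ε ≤ t k) (s : ℝ)
    (k : Fin N) : Integrable (fkerSqFactor H ε ℓ t s k) := by
  have hp : -1 < 2 * H k - 1 := by linarith [hH k]
  unfold fkerSqFactor
  split_ifs with hk
  · subst hk
    exact ((integrableOn_Icc_sub_rpow hp le_rfl).mono_set Ioc_subset_Icc_self).integrable_indicator
      measurableSet_Ioc
  · exact (integrableOn_Icc_sub_rpow hp (ht k hk)).integrable_indicator measurableSet_Icc

lemma memLp_fker (hH : ∀ k, 0 < H k) (ht : ∀ k, k ≠ ℓ → ε ≤ t k) :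
    MemLp (fker N H ε ℓ t) 2 := by
  rw [memLp_two_iff_integrable_sq measurable_fker.aestronglyMeasurable, funext (fker_sq_eq_prod ht)]
  exact Integrable.fintype_prod (integrable_fkerSqFactor hH ht ε)

lemma integral_fkerSqFactor_self (hH : 0 < H ℓ) {s : ℝ} (hs : s ≤ t ℓ) :
    ∫ y, fkerSqFactor H ε ℓ t s ℓ y = (t ℓ - s) ^ (2 * H ℓ) / (2 * H ℓ) := by
  have hp : -1 < 2 * H ℓ - 1 := by linarith
  rw [fkerSqFactor, if_pos rfl, integral_indicator measurableSet_Ioc,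
    ← intervalIntegral.integral_of_le hs,
    intervalIntegral.integral_comp_sub_left (fun x => x ^ (2 * H ℓ - 1)), integral_rpow (.inl hp),
    sub_self, sub_add_cancel, zero_rpow (by positivity), sub_zero]

lemma le_integral_fkerSqFactor_of_ne {k : Fin N} (hk : k ≠ ℓ) (hε : 0 ≤ ε) {lo hi : ℝ}
    (hlo : ε < lo) (ht : t k ∈ Icc lo hi) (hH : 0 < H k) (s : ℝ) :
    ε * min ((lo - ε) ^ (2 * H k - 1)) (hi ^ (2 * H k - 1)) ≤
      ∫ y, fkerSqFactor H ε ℓ t s k y := by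
  rw [fkerSqFactor, if_neg hk, integral_indicator measurableSet_Icc]
  have hbound : ∀ y ∈ Icc 0 ε, min ((lo - ε) ^ (2 * H k - 1)) (hi ^ (2 * H k - 1)) ≤
      (t k - y) ^ (2 * H k - 1) := fun y hy =>
    min_rpow_le_rpow (by linarith) ⟨by linarith [hy.2, ht.1], by linarith [hy.1, ht.2]⟩ _
  have h := setIntegral_ge_of_const_le_real measurableSet_Icc measure_Icc_lt_top.ne hbound
    (integrableOn_Icc_sub_rpow (by linarith) (by linarith [ht.1]))
  rwa [volume_real_Icc, sub_zero, max_eq_left hε, mul_comm] at h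

def slndConstant (H : Fin N → ℝ) (a b : Fin N → ℝ) (ε : ℝ) (ℓ : Fin N) : ℝ :=
  (2 * H ℓ)⁻¹ * ∏ k ∈ Finset.univ.erase ℓ, ε * min ((a k - ε) ^ (2 * H k - 1)) (b k ^ (2 * H k - 1))

lemma slndConstant_pos (hH : 0 < H ℓ) {a b : Fin N → ℝ} (hab : ∀ k, a k ≤ b k) (hε : 0 < ε)
    (hεa : ∀ k, ε < a k) : 0 < slndConstant H a b ε ℓ := by
  refine mul_pos (by positivity) (Finset.prod_pos fun k _ => mul_pos hε (lt_min ?_ ?_))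
  · exact rpow_pos_of_pos (by linarith [hεa k]) _
  · exact rpow_pos_of_pos (by linarith [hεa k, hab k]) _

lemma slndConstant_mul_le_prod_integral (hH : ∀ k, 0 < H k) (hε : 0 ≤ ε) {a b : Fin N → ℝ}
    (hεa : ∀ k, ε < a k) (ht : t ∈ Icc a b) {s : ℝ} (hs : s ≤ t ℓ) :
    slndConstant H a b ε ℓ * (t ℓ - s) ^ (2 * H ℓ) ≤ ∏ k, ∫ y, fkerSqFactor H ε ℓ t s k y := by
  have hsplit : slndConstant H a b ε ℓ * (t ℓ - s) ^ (2 * H ℓ) =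
      (t ℓ - s) ^ (2 * H ℓ) / (2 * H ℓ) *
        ∏ k ∈ Finset.univ.erase ℓ, ε * min ((a k - ε) ^ (2 * H k - 1)) (b k ^ (2 * H k - 1)) := by
    rw [slndConstant]
    ring
  rw [hsplit, ← Finset.mul_prod_erase _ _ (Finset.mem_univ ℓ), integral_fkerSqFactor_self (hH ℓ) hs]
  have hΔ : 0 ≤ (t ℓ - s) ^ (2 * H ℓ) / (2 * H ℓ) := by
    have := hH ℓ
    positivity
  refine mul_le_mul_of_nonneg_left (Finset.prod_le_prod (fun k _ => ?_) fun k hk => ?_) hΔ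
  · exact mul_nonneg hε (le_min (rpow_nonneg (by linarith [hεa k]) _)
      (rpow_nonneg (by linarith [hεa k, ht.1 k, ht.2 k]) _))
  · exact le_integral_fkerSqFactor_of_ne (Finset.ne_of_mem_erase hk) hε (hεa k)
      ⟨ht.1 k, ht.2 k⟩ (hH k) s

lemma integral_indicator_fker_sq_le {ι : Type*} (J : Finset ι) (τ : ι → Fin N → ℝ) (co : ι → ℝ)
    {s : ℝ} (hJ : ∀ j ∈ J, τ j ℓ ≤ s)
    (hint : Integrable fun r => (fker N H ε ℓ t r - ∑ j ∈ J, co j * fker N H ε ℓ (τ j) r) ^ 2) :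
    ∫ r, {r | s < r ℓ}.indicator (fun r => fker N H ε ℓ t r ^ 2) r ≤
      ∫ r, (fker N H ε ℓ t r - ∑ j ∈ J, co j * fker N H ε ℓ (τ j) r) ^ 2 := by
  refine integral_mono_of_nonneg (Filter.Eventually.of_forall fun r =>
    indicator_nonneg (fun _ _ => sq_nonneg _) r) hint (Filter.Eventually.of_forall fun r => ?_)
  dsimp only
  by_cases hr : r ∈ {r : Fin N → ℝ | s < r ℓ}
  · have hsum : ∑ j ∈ J, co j * fker N H ε ℓ (τ j) r = 0 :=
      Finset.sum_eq_zero fun j hj => by rw [fker_eq_zero_of_lt ((hJ j hj).trans_lt hr), mul_zero]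
    rw [indicator_of_mem hr, hsum, sub_zero]
  · rw [indicator_of_notMem hr]
    exact sq_nonneg _

theorem statement15_general (N : ℕ) (H : Fin N → ℝ) (hH : ∀ i, 0 < H i ∧ H i < 1)
    (a b : Fin N → ℝ) (hab : ∀ i, a i ≤ b i)
    (ε : ℝ) (hε : 0 < ε) (hεa : ∀ i, ε < a i) (ℓ : Fin N) :
    ∃ c : ℝ, 0 < c ∧
      ∀ n : ℕ, 2 ≤ n → ∀ t : ℕ → (Fin N → ℝ),
        (∀ j < n, t j ∈ Set.Icc a b) →
        (∀ i j, i ≤ j → j < n → t i ℓ ≤ t j ℓ) →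
        ∀ co : ℕ → ℝ,
          c * (t (n - 1) ℓ - t (n - 2) ℓ) ^ (2 * H ℓ) ≤
            ∫ r : Fin N → ℝ,
              (fker N H ε ℓ (t (n - 1)) r -
                ∑ j ∈ Finset.range (n - 1), co j * fker N H ε ℓ (t j) r) ^ 2 := by
  have hH₀ : ∀ k, 0 < H k := fun k => (hH k).1
  refine ⟨slndConstant H a b ε ℓ, slndConstant_pos (hH₀ ℓ) hab hε hεa,
    fun n hn t htI hmono co => ?_⟩
  have hεt : ∀ j < n, ∀ k, ε ≤ t j k := fun j hj k => (hεa k).le.trans ((htI j hj).1 k)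
  have hL2 : ∀ j < n, MemLp (fker N H ε ℓ (t j)) 2 := fun j hj =>
    memLp_fker hH₀ fun k _ => hεt j hj k
  have hint : Integrable fun r => (fker N H ε ℓ (t (n - 1)) r -
      ∑ j ∈ Finset.range (n - 1), co j * fker N H ε ℓ (t j) r) ^ 2 :=
    ((hL2 _ (by omega)).sub (memLp_finsetSum _ fun j hj =>
      (hL2 j (by rw [Finset.mem_range] at hj; omega)).const_mul (co j))).integrable_sq
  calc slndConstant H a b ε ℓ * (t (n - 1) ℓ - t (n - 2) ℓ) ^ (2 * H ℓ)
      ≤ ∏ k, ∫ y, fkerSqFactor H ε ℓ (t (n - 1)) (t (n - 2) ℓ) k y :=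
        slndConstant_mul_le_prod_integral hH₀ hε.le hεa (htI _ (by omega))
          (hmono _ _ (by omega) (by omega))
    _ = ∫ r, {r | t (n - 2) ℓ < r ℓ}.indicator (fun r => fker N H ε ℓ (t (n - 1)) r ^ 2) r := by
        simp_rw [indicator_fker_sq_eq_prod (hεt (n - 2) (by omega) ℓ)
          fun k _ => hεt (n - 1) (by omega) k]
        exact (integral_fintype_prod_eq_prod _).symm
    _ ≤ _ := integral_indicator_fker_sq_le _ _ _
        (fun j hj => hmono _ _ (by rw [Finset.mem_range] at hj; omega) (by omega)) hint

/-- Lemma 2.1, L² form: strong local nondeterminism of `Y_ℓ` along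
the `ℓ`-th direction. -/
theorem statement15 (N : ℕ) (H : Fin N → ℝ) (hH : ∀ i, 0 < H i ∧ H i < 1)
    (a b : Fin N → ℝ) (ha : ∀ i, 0 < a i) (hab : ∀ i, a i ≤ b i)
    (ε : ℝ) (hε : 0 < ε) (hεa : ∀ i, ε < a i) (ℓ : Fin N) :
    ∃ c : ℝ, 0 < c ∧
      ∀ n : ℕ, 2 ≤ n → ∀ t : ℕ → (Fin N → ℝ),
        (∀ j < n, t j ∈ Set.Icc a b) →
        (∀ i j, i ≤ j → j < n → t i ℓ ≤ t j ℓ) →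
        ∀ co : ℕ → ℝ,
          c * (t (n - 1) ℓ - t (n - 2) ℓ) ^ (2 * H ℓ) ≤
            ∫ r : Fin N → ℝ,
              (fker N H ε ℓ (t (n - 1)) r -
                ∑ j ∈ Finset.range (n - 1), co j * fker N H ε ℓ (t j) r) ^ 2 :=
  statement15_general N H hH a b hab ε hε hεa ℓ
end
end

section
/- Let n ≥ 1 and k ≥ 1 be integers, let B_1, …, B_k be real symmetric positive definite n×n matrices, let A be a real symmetric n×n matrix such that xᵀAx ≥ ∑_{ℓ=1}^k xᵀB_ℓx for all x ∈ ℝ^n, and let p_1, …, p_k ∈ [1,∞) satisfy ∑_{ℓ=1}^k 1/p_ℓ = 1. Then A is positive definite and det A ≥ ∏_{ℓ=1}^k (det B_ℓ)^{1/p_ℓ}. -/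
/-!
In the Loewner order the hypothesis says `∑ B_ℓ ≤ A`, so `B_ℓ ≤ A` for every `ℓ`. The determinant
is monotone on positive semidefinite matrices: conjugating by `A^{-1/2}` turns `B_ℓ ≤ A` into
`A^{-1/2} B_ℓ A^{-1/2} ≤ 1`, whose eigenvalues lie in `[0, 1]`. Hence `det B_ℓ ≤ det A`, and
weighted AM-GM gives `∏ (det B_ℓ)^{1/p_ℓ} ≤ ∑ (1/p_ℓ) det B_ℓ ≤ det A`.
-/

open Matrix MatrixOrder

namespace Matrix

variable {n : Type*} [Fintype n]

lemma le_of_dotProduct_mulVec_le {A B : Matrix n n ℝ} (hA : A.IsHermitian) (hB : B.IsHermitian)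
    (h : ∀ x : n → ℝ, x ⬝ᵥ B *ᵥ x ≤ x ⬝ᵥ A *ᵥ x) : B ≤ A :=
  le_iff.mpr <| .of_dotProduct_mulVec_nonneg (hA.sub hB) fun x => by
    simpa [sub_mulVec, dotProduct_sub] using h x

variable [DecidableEq n]

lemma PosSemidef.det_le_one {M : Matrix n n ℝ} (hM : M.PosSemidef) (h : M ≤ 1) : M.det ≤ 1 := by
  have hspec := (CFC.le_one_iff (R := ℝ) M hM.isHermitian.isSelfAdjoint).mp h
  rw [hM.isHermitian.det_eq_prod_eigenvalues]
  exact Finset.prod_le_one (fun i _ => hM.eigenvalues_nonneg i)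
    fun i _ => hspec _ (hM.isHermitian.eigenvalues_mem_spectrum_real i)

lemma det_le_det_of_le {A B : Matrix n n ℝ} (hB : B.PosSemidef) (hA : A.PosDef) (h : B ≤ A) :
    B.det ≤ A.det := by
  set S := CFC.sqrt A
  have hSS : S * S = A := CFC.sqrt_mul_sqrt_self A hA.posSemidef.nonneg
  have hS : S.IsHermitian := (CFC.sqrt_nonneg A).posSemidef.isHermitian
  have hSu : IsUnit S.det :=
    (isUnit_iff_isUnit_det S).mp ((CFC.isUnit_sqrt_iff A).mpr hA.isUnit)
  have hSAS : S⁻¹ * A * S⁻¹ = 1 := by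
    rw [← hSS, ← mul_assoc, nonsing_inv_mul _ hSu, one_mul, mul_nonsing_inv _ hSu]
  have hSBS_le : S⁻¹ * B * S⁻¹ ≤ 1 := hSAS ▸ IsSelfAdjoint.conjugate_le_conjugate h hS.inv
  have hSBS : (S⁻¹ * B * S⁻¹).PosSemidef := by
    simpa only [hS.inv.eq] using hB.conjTranspose_mul_mul_same S⁻¹
  have hdetB := hSBS.det_le_one hSBS_le
  have hdetA : S⁻¹.det * A.det * S⁻¹.det = 1 := by rw [← det_mul, ← det_mul, hSAS, det_one]
  have hr : 0 < S⁻¹.det * S⁻¹.det := mul_self_pos.mpr (isUnit_nonsing_inv_det S hSu).ne_zero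
  rw [det_mul, det_mul] at hdetB
  refine le_of_mul_le_mul_left ?_ hr
  linarith

end Matrix

theorem statement17_general (n k : ℕ) (hk : 1 ≤ k)
    (A : Matrix (Fin n) (Fin n) ℝ) (hA : A.IsSymm)
    (Bm : Fin k → Matrix (Fin n) (Fin n) ℝ) (hBm : ∀ ℓ, (Bm ℓ).PosDef)
    (hAB : ∀ x : Fin n → ℝ, ∑ ℓ, x ⬝ᵥ (Bm ℓ).mulVec x ≤ x ⬝ᵥ A.mulVec x)
    (p : Fin k → ℝ) (hp : ∀ ℓ, 1 ≤ p ℓ) (hps : ∑ ℓ, 1 / p ℓ = 1) :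
    A.PosDef ∧ ∏ ℓ, (Bm ℓ).det ^ (1 / p ℓ) ≤ A.det := by
  have hsum : ∑ ℓ, Bm ℓ ≤ A :=
    le_of_dotProduct_mulVec_le (isHermitian_iff_isSymm.mpr hA)
      (posSemidef_sum _ fun ℓ _ => (hBm ℓ).posSemidef).isHermitian
      (by simpa only [sum_mulVec, dotProduct_sum] using hAB)
  have hle (ℓ : Fin k) : Bm ℓ ≤ A :=
    (Finset.single_le_sum (fun m _ => (hBm m).posSemidef.nonneg) (Finset.mem_univ ℓ)).trans hsum
  have hApd : A.PosDef := by
    simpa using (hBm ⟨0, hk⟩).add_posSemidef (le_iff.mp (hle ⟨0, hk⟩))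
  refine ⟨hApd, ?_⟩
  have hw (ℓ : Fin k) : 0 ≤ 1 / p ℓ := one_div_nonneg.mpr (zero_le_one.trans (hp ℓ))
  calc ∏ ℓ, (Bm ℓ).det ^ (1 / p ℓ)
      ≤ ∑ ℓ, 1 / p ℓ * (Bm ℓ).det :=
        Real.geom_mean_le_arith_mean_weighted _ _ _ (fun ℓ _ => hw ℓ) hps
          fun ℓ _ => (hBm ℓ).det_pos.le
    _ ≤ ∑ ℓ, 1 / p ℓ * A.det := by
        gcongr with ℓ
        · exact hw ℓ
        · exact det_le_det_of_le (hBm ℓ).posSemidef hApd (hle ℓ)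
    _ = A.det := by rw [← Finset.sum_mul, hps, one_mul]

/-- linear-algebra content of (2.11)/(2.13): if the quadratic form
of a symmetric matrix `A` dominates the sum of the quadratic forms of positive definite
matrices `B₁, …, B_k`, then `A` is positive definite and
`det A ≥ ∏ (det B_ℓ)^{1/p_ℓ}` for any Hölder exponents `p_ℓ`. -/
theorem statement17 (n k : ℕ) (hn : 1 ≤ n) (hk : 1 ≤ k)
    (A : Matrix (Fin n) (Fin n) ℝ) (hA : A.IsSymm)
    (Bm : Fin k → Matrix (Fin n) (Fin n) ℝ) (hBm : ∀ ℓ, (Bm ℓ).PosDef)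
    (hAB : ∀ x : Fin n → ℝ, ∑ ℓ, x ⬝ᵥ (Bm ℓ).mulVec x ≤ x ⬝ᵥ A.mulVec x)
    (p : Fin k → ℝ) (hp : ∀ ℓ, 1 ≤ p ℓ) (hps : ∑ ℓ, 1 / p ℓ = 1) :
    A.PosDef ∧ ∏ ℓ, (Bm ℓ).det ^ (1 / p ℓ) ≤ A.det :=
  statement17_general n k hk A hA Bm hBm hAB p hp hps
end

section
/- Let H = (H_1,…,H_N) ∈ (0,1)^N with H_1 ≤ ⋯ ≤ H_N, let q ∈ [0, ∑_{ℓ=1}^N 1/H_ℓ), and let τ ∈ {1,…,N} be the integer such that ∑_{ℓ=1}^{τ−1} 1/H_ℓ ≤ q < ∑_{ℓ=1}^{τ} 1/H_ℓ (with the convention that the empty sum equals 0). Then there exists δ_τ ∈ (0,1], depending only on (H_1,…,H_N), such that for every δ ∈ (0, δ_τ) there exist real numbers p_1, …, p_τ ∈ [1,∞) satisfying ∑_{ℓ=1}^τ 1/p_ℓ = 1, H_ℓ q / p_ℓ < 1 for every ℓ = 1,…,τ, and (1−δ) ∑_{ℓ=1}^τ H_ℓ q / p_ℓ ≤ H_τ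 q + τ − ∑_{ℓ=1}^τ H_τ/H_ℓ. -/
/-!
Write `τ = k + 1` and `s = ∑_{ℓ<k} 1/H_ℓ ≤ q`, so that `H_ℓ q ≥ 1` for `ℓ < k`. For a parameter
`t ∈ (0,1)` take `p_ℓ = H_ℓ q / t` for `ℓ < k` and let `p_k` carry the remaining weight
`1 - t s / q`. Then `H_ℓ q / p_ℓ = t` for `ℓ < k` and `H_k q / p_k = H_k q - t R` with
`R = ∑_{ℓ<k} H_k / H_ℓ`; at `t = 1` the latter is `H_k (q - s) < 1`. The sum `∑ H_ℓ q / p_ℓ`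
exceeds the right-hand side `M = H_k q + k - R ≥ k` by `X = (1 - t) ∑_{ℓ<k} (H_k / H_ℓ - 1)`, and
`X ≤ k δ ≤ δ M` once `t` is close enough to `1`, which gives `(1 - δ) (M + X) ≤ M`.
-/

open Finset Filter Topology

theorem one_le_mul_of_sum_one_div_le {ι : Type*} {s : Finset ι} {H : ι → ℝ} {q : ℝ}
    (hH : ∀ i ∈ s, 0 < H i) (hq : ∑ i ∈ s, 1 / H i ≤ q) {i : ι} (hi : i ∈ s) :
    1 ≤ H i * q := by
  rw [← div_le_iff₀' (hH i hi)]
  exact (single_le_sum (fun j hj => (one_div_pos.2 (hH j hj)).le) hi).trans hq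

theorem eventually_one_sub_mul_sum_le {ι : Type*} (s : Finset ι) (c : ι → ℝ) {δ : ℝ}
    (hδ : 0 < δ) : ∀ᶠ t in 𝓝 (1 : ℝ), (1 - t) * ∑ i ∈ s, c i ≤ #s * δ := by
  have hterm : ∀ᶠ t in 𝓝 (1 : ℝ), ∀ i ∈ s, (1 - t) * c i ≤ δ :=
    (eventually_all_finset s).2 fun i _ =>
      (ContinuousAt.eventually_lt (by fun_prop) continuousAt_const (by simpa using hδ)).mono
        fun _ h => h.le
  filter_upwards [hterm] with t ht
  simpa [mul_sum] using sum_le_sum ht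

theorem exists_mem_Ioo_sub_mul_sum_lt_and_one_sub_mul_sum_le {ι : Type*} (s : Finset ι)
    (r : ι → ℝ) {a δ : ℝ} (ha : a - ∑ i ∈ s, r i < 1) (hδ : 0 < δ) :
    ∃ t ∈ Set.Ioo 0 1, a - t * ∑ i ∈ s, r i < 1 ∧ (1 - t) * ∑ i ∈ s, (r i - 1) ≤ #s * δ := by
  refine Eventually.exists (f := 𝓝[<] (1 : ℝ)) ?_
  filter_upwards [nhdsWithin_le_nhds (eventually_gt_nhds one_pos), eventually_mem_nhdsWithin,
    nhdsWithin_le_nhds (ContinuousAt.eventually_lt (f := fun t => a - t * ∑ i ∈ s, r i)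
      (by fun_prop) continuousAt_const (by simpa using ha)),
    nhdsWithin_le_nhds (eventually_one_sub_mul_sum_le s (fun i => r i - 1) hδ)]
    with t h0 h1 h2 h3
  exact ⟨⟨h0, h1⟩, h2, h3⟩

theorem one_sub_mul_add_le {δ M X : ℝ} (hδ0 : 0 ≤ δ) (hδ1 : δ ≤ 1) (hM : 0 ≤ M)
    (hX : X ≤ δ * M) : (1 - δ) * (M + X) ≤ M := by
  rcases le_total 0 X with hX0 | hX0 <;> nlinarith

noncomputable def holderExponent (H : ℕ → ℝ) (q t : ℝ) (k ℓ : ℕ) : ℝ :=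
  if ℓ < k then H ℓ * q / t else (1 - ∑ i ∈ range k, t / (H i * q))⁻¹

section HolderExponent

variable {H : ℕ → ℝ} {q t : ℝ} {k : ℕ}

theorem sum_one_div_holderExponent :
    ∑ ℓ ∈ range (k + 1), 1 / holderExponent H q t k ℓ = 1 := by
  rw [sum_range_succ, sum_congr rfl fun ℓ hℓ => by
    rw [holderExponent, if_pos (mem_range.1 hℓ), one_div_div]]
  simp [holderExponent]

theorem mul_div_holderExponent_of_lt {ℓ : ℕ} (hℓ : ℓ < k) (h : H ℓ * q ≠ 0) :
    H ℓ * q / holderExponent H q t k ℓ = t := by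
  rw [holderExponent, if_pos hℓ, div_div_cancel₀ h]

theorem mul_div_holderExponent_self (ha : ∀ i < k, 1 ≤ H i * q) :
    H k * q / holderExponent H q t k k = H k * q - t * ∑ i ∈ range k, H k / H i := by
  rw [holderExponent, if_neg (lt_irrefl k), div_inv_eq_mul, mul_sub, mul_one, mul_sum, mul_sum]
  congr 1
  refine sum_congr rfl fun i hi => ?_
  have h : H i * q ≠ 0 := (one_pos.trans_le (ha i (mem_range.1 hi))).ne'
  have hH : H i ≠ 0 := left_ne_zero_of_mul h
  have hq : q ≠ 0 := right_ne_zero_of_mul h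
  field_simp

theorem sum_mul_div_holderExponent (ha : ∀ i < k, 1 ≤ H i * q) :
    ∑ ℓ ∈ range (k + 1), H ℓ * q / holderExponent H q t k ℓ =
      k * t + (H k * q - t * ∑ i ∈ range k, H k / H i) := by
  rw [sum_range_succ, mul_div_holderExponent_self ha, sum_congr rfl fun ℓ hℓ =>
    mul_div_holderExponent_of_lt (mem_range.1 hℓ) (one_pos.trans_le (ha ℓ (mem_range.1 hℓ))).ne']
  simp

theorem one_le_holderExponent (ha : ∀ i < k, 1 ≤ H i * q)
    (hsum : ∑ i ∈ range k, 1 / (H i * q) ≤ 1) (ht0 : 0 < t) (ht1 : t < 1) (ℓ : ℕ) :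
    1 ≤ holderExponent H q t k ℓ := by
  unfold holderExponent
  split_ifs with hℓ
  · rw [le_div_iff₀ ht0, one_mul]
    exact ht1.le.trans (ha ℓ hℓ)
  · have hw : ∑ i ∈ range k, t / (H i * q) = t * ∑ i ∈ range k, 1 / (H i * q) := by
      simp_rw [mul_sum, mul_one_div]
    have hnonneg : 0 ≤ ∑ i ∈ range k, 1 / (H i * q) :=
      sum_nonneg fun i hi => one_div_nonneg.2 (zero_le_one.trans (ha i (mem_range.1 hi)))
    rw [hw, one_le_inv₀ (by nlinarith)]
    nlinarith

theorem mul_div_holderExponent_lt_one (ha : ∀ i < k, 1 ≤ H i * q) (ht1 : t < 1)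
    (hlast : H k * q - t * ∑ i ∈ range k, H k / H i < 1) {ℓ : ℕ} (hℓ : ℓ < k + 1) :
    H ℓ * q / holderExponent H q t k ℓ < 1 := by
  rcases (Nat.lt_succ_iff.1 hℓ).lt_or_eq with hℓ | rfl
  · rwa [mul_div_holderExponent_of_lt hℓ (one_pos.trans_le (ha ℓ hℓ)).ne']
  · rwa [mul_div_holderExponent_self ha]

theorem one_sub_mul_sum_mul_div_holderExponent_le {δ : ℝ} (ha : ∀ i < k, 1 ≤ H i * q)
    (hHk : H k ≠ 0) (hR : ∑ i ∈ range k, H k / H i ≤ H k * q) (hδ0 : 0 ≤ δ) (hδ1 : δ ≤ 1)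
    (hdefect : (1 - t) * ∑ i ∈ range k, (H k / H i - 1) ≤ k * δ) :
    (1 - δ) * ∑ ℓ ∈ range (k + 1), H ℓ * q / holderExponent H q t k ℓ ≤
      H k * q + ↑(k + 1) - ∑ ℓ ∈ range (k + 1), H k / H ℓ := by
  set R := ∑ i ∈ range k, H k / H i
  have hX : (1 - t) * (R - k) ≤ δ * (H k * q + k - R) := by
    rw [sum_sub_distrib] at hdefect
    simp only [sum_const, card_range, nsmul_eq_mul, mul_one] at hdefect
    nlinarith
  rw [sum_mul_div_holderExponent ha, sum_range_succ, div_self hHk]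
  calc (1 - δ) * (k * t + (H k * q - t * R))
      = (1 - δ) * ((H k * q + k - R) + (1 - t) * (R - k)) := by ring
    _ ≤ H k * q + k - R := one_sub_mul_add_le hδ0 hδ1
        (by linarith [Nat.cast_nonneg (α := ℝ) k]) hX
    _ = H k * q + ↑(k + 1) - (R + 1) := by push_cast; ring

end HolderExponent

theorem statement18_general (N : ℕ) (H : ℕ → ℝ)
    (hH0 : ∀ ℓ < N, 0 < H ℓ)
    (q : ℝ) (hq0 : 0 ≤ q)
    (τ : ℕ) (hτ1 : 1 ≤ τ) (hτN : τ ≤ N)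
    (hτlo : ∑ ℓ ∈ Finset.range (τ - 1), 1 / H ℓ ≤ q)
    (hτhi : q < ∑ ℓ ∈ Finset.range τ, 1 / H ℓ) :
    ∃ δτ : ℝ, 0 < δτ ∧ δτ ≤ 1 ∧
      ∀ δ : ℝ, 0 < δ → δ < δτ →
        ∃ p : ℕ → ℝ,
          (∀ ℓ < τ, 1 ≤ p ℓ) ∧
          (∑ ℓ ∈ Finset.range τ, 1 / p ℓ = 1) ∧
          (∀ ℓ < τ, H ℓ * q / p ℓ < 1) ∧
          (1 - δ) * ∑ ℓ ∈ Finset.range τ, H ℓ * q / p ℓ ≤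
            H (τ - 1) * q + τ - ∑ ℓ ∈ Finset.range τ, H (τ - 1) / H ℓ := by
  obtain ⟨k, rfl⟩ : ∃ k, τ = k + 1 := ⟨τ - 1, by omega⟩
  rw [add_tsub_cancel_right] at hτlo ⊢
  rw [sum_range_succ] at hτhi
  have hH : ∀ i ≤ k, 0 < H i := fun i hi => hH0 i (by omega)
  have hHk : 0 < H k := hH k le_rfl
  have ha : ∀ i < k, 1 ≤ H i * q := fun i hi => one_le_mul_of_sum_one_div_le
    (fun j hj => hH j (mem_range.1 hj).le) hτlo (mem_range.2 hi)
  have hsum : ∑ i ∈ range k, 1 / (H i * q) ≤ 1 := by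
    simp_rw [← div_div]
    rw [← sum_div]
    exact div_le_one_of_le₀ hτlo hq0
  have hR : ∑ i ∈ range k, H k / H i = H k * ∑ i ∈ range k, 1 / H i := by
    simp_rw [mul_sum, mul_one_div]
  have hgap : H k * q - ∑ i ∈ range k, H k / H i < 1 := by
    have := mul_lt_mul_of_pos_left hτhi hHk
    rw [mul_add, mul_one_div_cancel hHk.ne'] at this
    linarith
  refine ⟨1, one_pos, le_rfl, fun δ hδ0 hδ1 => ?_⟩
  obtain ⟨t, ⟨ht0, ht1⟩, hlast, hdefect⟩ :=
    exists_mem_Ioo_sub_mul_sum_lt_and_one_sub_mul_sum_le (range k) (fun i => H k / H i) hgap hδ0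
  rw [card_range] at hdefect
  exact ⟨holderExponent H q t k, fun ℓ _ => one_le_holderExponent ha hsum ht0 ht1 ℓ,
    sum_one_div_holderExponent, fun ℓ => mul_div_holderExponent_lt_one ha ht1 hlast,
    one_sub_mul_sum_mul_div_holderExponent_le ha hHk.ne'
      (hR ▸ mul_le_mul_of_nonneg_left hτlo hHk.le) hδ0.le hδ1.le hdefect⟩

/-- Lemma 3.4, (3.7)–(3.8): existence of Hölder exponents
`p₁, …, p_τ` adapted to the indices `H₁ ≤ ⋯ ≤ H_N` and to `q`. (Here `H ℓ` denotes
`H_{ℓ+1}` of the paper, so `H (τ-1)` is `H_τ`.) -/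
theorem statement18 (N : ℕ) (hN : 1 ≤ N) (H : ℕ → ℝ)
    (hH0 : ∀ ℓ < N, 0 < H ℓ) (hH1 : ∀ ℓ < N, H ℓ < 1)
    (hHmono : ∀ i j : ℕ, i ≤ j → j < N → H i ≤ H j)
    (q : ℝ) (hq0 : 0 ≤ q) (hqN : q < ∑ ℓ ∈ Finset.range N, 1 / H ℓ)
    (τ : ℕ) (hτ1 : 1 ≤ τ) (hτN : τ ≤ N)
    (hτlo : ∑ ℓ ∈ Finset.range (τ - 1), 1 / H ℓ ≤ q)
    (hτhi : q < ∑ ℓ ∈ Finset.range τ, 1 / H ℓ) :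
    ∃ δτ : ℝ, 0 < δτ ∧ δτ ≤ 1 ∧
      ∀ δ : ℝ, 0 < δ → δ < δτ →
        ∃ p : ℕ → ℝ,
          (∀ ℓ < τ, 1 ≤ p ℓ) ∧
          (∑ ℓ ∈ Finset.range τ, 1 / p ℓ = 1) ∧
          (∀ ℓ < τ, H ℓ * q / p ℓ < 1) ∧
          (1 - δ) * ∑ ℓ ∈ Finset.range τ, H ℓ * q / p ℓ ≤
            H (τ - 1) * q + τ - ∑ ℓ ∈ Finset.range τ, H (τ - 1) / H ℓ :=
  statement18_general N H hH0 q hq0 τ hτ1 hτN hτlo hτhi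
end
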